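/- arXiv:1109.6394 — 3 statements merged into one kernel-verified Lean document; each statement's English description precedes it below -/
import Mathlib

section
/- Let n, m ≥ 1 and let P, Q be n-dimensional linear subspaces of ℝ^{n+m}. Let (e_1,…,e_n) be an orthonormal basis of P and (f_1,…,f_n) an orthonormal basis of Q, and let W = (⟨e_i, f_j⟩)_{1≤i,j≤n} be the associated W-matrix. Then the following statements are equivalent: (a) dim(P ∩ Q) = n − 1 and det W = 0; (b) dim(P + Q) = n + 1 and det W = 0; (c) the matrix WᵀW has eigenvalue 1 with multiplicity n − 1 and eigenvalue 0 with multiplicity 1 (equivalently, WᵀW is an idempotent symmetric matrix of rank n − 1); (e) there exist orthonormal vectors u_1, u_2, …, u_n, u_{n+1} in ℝ^{n+m} such that P = span(u_1, u_2, …, u_n) and Q = span(u_{n+1}, u_2, …, u_n). (All four conditions are independent of the chosen orthonormal bases, since |det W| and the eigenvalues of WᵀW do not depend on these choices.) -/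
/-!
Let `T x = ∑ j, x j • f j`, an isometry of `ℝⁿ` onto `Q`. The vector `W x` lists the inner
products of `T x` with the `e i`, so a kernel vector of `W` gives a nonzero vector of `Q ∩ Pᗮ`,
and `T` maps the fixed vectors of `WᵀW` into `P ∩ Q`. Hence `(c) ⇒ (a)`, and `(a) ⇔ (b)` is the
dimension formula. For `(a) ⇒ (e)`, complete an orthonormal basis of `P ∩ Q` by unit vectors of
`P ⊖ (P ∩ Q)` and of `Q ∩ Pᗮ`. For `(e) ⇒ (c)`, the W-matrix of the two frames cut out of `u` is
`diag(0, 1, …, 1)`, and passing to the bases `e`, `f` conjugates `WᵀW` by an orthogonal matrix.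
-/

noncomputable section

open Module Matrix

/-- The `W`-matrix `(⟨e_i, f_j⟩)` of two families of vectors in a Euclidean space. -/
def Wmatrix {n N : ℕ} (e f : Fin n → EuclideanSpace ℝ (Fin N)) : Matrix (Fin n) (Fin n) ℝ :=
  Matrix.of fun i j => (inner ℝ (e i) (f j) : ℝ)

open Submodule Set RealInnerProductSpace

theorem span_range_eq_of_linearIndependent {K V ι : Type*} [DivisionRing K] [AddCommGroup V]
    [Module K V] [Fintype ι] {W : Submodule K V} [FiniteDimensional K W] {w : ι → V}
    (hw : LinearIndependent K w) (hmem : ∀ i, w i ∈ W) (hcard : finrank K W = Fintype.card ι) :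
    span K (range w) = W :=
  eq_of_le_of_finrank_eq (span_le.2 (range_subset_iff.2 hmem))
    (by rw [finrank_span_eq_card hw, hcard])

theorem injective_ite_val_eq_zero_last_castSucc (n : ℕ) :
    Function.Injective fun j : Fin n => if (j : ℕ) = 0 then Fin.last n else j.castSucc := by
  intro i j hij
  by_cases hi : (i : ℕ) = 0 <;> by_cases hj : (j : ℕ) = 0 <;> simp_all [Fin.ext_iff] <;> omega

section InnerProductSpace

variable {E : Type*} [NormedAddCommGroup E] [InnerProductSpace ℝ E]

theorem Submodule.exists_mem_norm_eq_one {K : Submodule ℝ E} (hK : K ≠ ⊥) : ∃ x ∈ K, ‖x‖ = 1 := by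
  obtain ⟨x, hxK, hx0⟩ := K.exists_mem_ne_zero_of_ne_bot hK
  exact ⟨‖x‖⁻¹ • x, K.smul_mem _ hxK, norm_smul_inv_norm hx0⟩

theorem Orthonormal.fin_cons {k : ℕ} {a : E} {v : Fin k → E} (hv : Orthonormal ℝ v)
    (ha : ‖a‖ = 1) (hav : ∀ i, ⟪a, v i⟫ = 0) : Orthonormal ℝ (Fin.cons a v : Fin (k + 1) → E) := by
  rw [orthonormal_iff_ite] at hv ⊢
  intro i j
  cases i using Fin.cases <;> cases j using Fin.cases <;>
    simp [hv, hav, real_inner_comm a, ha, Fin.succ_ne_zero, (Fin.succ_ne_zero _).symm]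

theorem Orthonormal.fin_snoc {k : ℕ} {v : Fin k → E} {b : E} (hv : Orthonormal ℝ v)
    (hb : ‖b‖ = 1) (hvb : ∀ i, ⟪v i, b⟫ = 0) : Orthonormal ℝ (Fin.snoc v b : Fin (k + 1) → E) := by
  rw [orthonormal_iff_ite] at hv ⊢
  intro i j
  cases i using Fin.lastCases <;> cases j using Fin.lastCases <;>
    simp [hv, hvb, real_inner_comm _ b, hb, Fin.castSucc_ne_last, (Fin.castSucc_ne_last _).symm]

theorem mem_orthogonal_span_range_iff {ι : Type*} [Fintype ι] {v : ι → E} {x : E} :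
    x ∈ (span ℝ (range v))ᗮ ↔ ∀ i, ⟪v i, x⟫ = 0 := by
  refine ⟨fun h i => inner_right_of_mem_orthogonal (subset_span (mem_range_self i)) h,
    fun h => (mem_orthogonal _ _).2 fun y hy => ?_⟩
  obtain ⟨c, rfl⟩ := (mem_span_range_iff_exists_fun ℝ).1 hy
  simp [sum_inner, real_inner_smul_left, h]

theorem eq_of_sub_mem_orthogonal_of_mem {P Q : Submodule ℝ E} {p q : E} (hp : p ∈ P) (hq : q ∈ Q)
    (hpqP : p - q ∈ Pᗮ) (hpqQ : p - q ∈ Qᗮ) : p = q := by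
  rw [← sub_eq_zero, ← inner_self_eq_zero (𝕜 := ℝ), inner_sub_left,
    inner_right_of_mem_orthogonal hp hpqP, inner_right_of_mem_orthogonal hq hpqQ, sub_zero]

theorem inner_eq_sum_inner_mul_inner {ι : Type*} [Fintype ι] {v : ι → E} (hv : Orthonormal ℝ v)
    {x : E} (hx : x ∈ span ℝ (range v)) (y : E) : ⟪x, y⟫ = ∑ i, ⟪v i, x⟫ * ⟪v i, y⟫ := by
  obtain ⟨c, rfl⟩ := (mem_span_range_iff_exists_fun ℝ).1 hx
  simp [sum_inner, real_inner_smul_left, hv.inner_right_fintype]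

theorem finrank_inf_lt_of_inf_orthogonal_ne_bot {P Q : Submodule ℝ E} [FiniteDimensional ℝ Q]
    (h : Q ⊓ Pᗮ ≠ ⊥) : finrank ℝ ↥(P ⊓ Q) < finrank ℝ Q := by
  refine finrank_lt_finrank_of_lt (inf_le_right.lt_of_ne fun hPQ => h ?_)
  rw [← hPQ, inf_right_comm, inf_orthogonal_eq_bot, bot_inf_eq]

theorem exists_orthonormal_family_mem {K : Submodule ℝ E} [FiniteDimensional ℝ K] {k : ℕ}
    (hK : finrank ℝ K = k) : ∃ v : Fin k → E, Orthonormal ℝ v ∧ ∀ i, v i ∈ K := by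
  let b := (stdOrthonormalBasis ℝ K).reindex (finCongr hK)
  exact ⟨fun i => b i, b.orthonormal.comp_linearIsometry K.subtypeₗᵢ, fun i => (b i).2⟩

theorem exists_orthonormal_of_finrank_inf [FiniteDimensional ℝ E] {k : ℕ} {P Q : Submodule ℝ E}
    (hP : finrank ℝ P = k + 1) (hQ : finrank ℝ Q = k + 1) (hPQ : finrank ℝ ↥(P ⊓ Q) = k)
    (hQP : Q ⊓ Pᗮ ≠ ⊥) :
    ∃ u : Fin (k + 1 + 1) → E, Orthonormal ℝ u ∧
      P = span ℝ (range fun i : Fin (k + 1) => u i.castSucc) ∧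
      Q = span ℝ (range fun i : Fin (k + 1) =>
        if (i : ℕ) = 0 then u (Fin.last (k + 1)) else u i.castSucc) := by
  obtain ⟨v, hv, hvPQ⟩ := exists_orthonormal_family_mem hPQ
  have hPQP : (P ⊓ Q)ᗮ ⊓ P ≠ ⊥ := by
    intro h
    have := finrank_add_inf_finrank_orthogonal (inf_le_left : P ⊓ Q ≤ P)
    rw [h, finrank_bot] at this
    omega
  obtain ⟨a, ⟨haPQ, haP⟩, ha⟩ := exists_mem_norm_eq_one hPQP
  obtain ⟨b, ⟨hbQ, hbP⟩, hb⟩ := exists_mem_norm_eq_one hQP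
  have hav : ∀ i, ⟪a, v i⟫ = 0 := fun i => inner_left_of_mem_orthogonal (hvPQ i) haPQ
  have hvb : ∀ i, ⟪v i, b⟫ = 0 := fun i => inner_right_of_mem_orthogonal (hvPQ i).1 hbP
  have hab : ⟪a, b⟫ = 0 := inner_right_of_mem_orthogonal haP hbP
  have hav' : Orthonormal ℝ (Fin.cons a v : Fin (k + 1) → E) := hv.fin_cons ha hav
  have hbv' : Orthonormal ℝ (Fin.cons b v : Fin (k + 1) → E) :=
    hv.fin_cons hb fun i => by rw [real_inner_comm, hvb]
  let u : Fin (k + 1 + 1) → E := Fin.snoc (Fin.cons a v) b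
  have hPfamily : (fun i : Fin (k + 1) => u i.castSucc) = Fin.cons a v := by
    funext i
    simp [u]
  have hQfamily : (fun i : Fin (k + 1) =>
      if (i : ℕ) = 0 then u (Fin.last (k + 1)) else u i.castSucc) = Fin.cons b v := by
    funext i
    cases i using Fin.cases <;> simp [u, -Fin.castSucc_succ]
  refine ⟨u, hav'.fin_snoc hb (Fin.cases hab hvb), ?_, ?_⟩
  · rw [hPfamily, span_range_eq_of_linearIndependent hav'.linearIndependent
      (Fin.cases haP fun i => (hvPQ i).1) (by simp [hP])]
  · rw [hQfamily, span_range_eq_of_linearIndependent hbv'.linearIndependent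
      (Fin.cases hbQ fun i => (hvPQ i).2) (by simp [hQ])]

end InnerProductSpace

section OrthogonalConjugation

variable {ι R : Type*} [Fintype ι] [DecidableEq ι] [CommRing R]

theorem IsIdempotentElem.transpose_mul_mul {B M : Matrix ι ι R} (hB : B * Bᵀ = 1)
    (hM : IsIdempotentElem M) : IsIdempotentElem (Bᵀ * M * B) := by
  rw [IsIdempotentElem]
  simp only [Matrix.mul_assoc]
  rw [← Matrix.mul_assoc B, hB, Matrix.one_mul, ← Matrix.mul_assoc M, hM.eq]

theorem rank_transpose_mul_mul_of_mul_transpose_eq_one {B : Matrix ι ι R} (M : Matrix ι ι R)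
    (hB : B * Bᵀ = 1) : (Bᵀ * M * B).rank = M.rank := by
  rw [rank_mul_eq_left_of_isUnit_det B _ (isUnit_det_of_right_inverse hB),
    rank_mul_eq_right_of_isUnit_det _ _ (isUnit_det_of_left_inverse hB)]

end OrthogonalConjugation

theorem isIdempotentElem_diagonal_ite_val_eq_zero {n : ℕ} :
    IsIdempotentElem (diagonal fun j : Fin n => if (j : ℕ) = 0 then (0 : ℝ) else 1) := by
  rw [IsIdempotentElem, diagonal_mul_diagonal]
  congr 1
  funext j
  split_ifs <;> simp

theorem rank_diagonal_ite_val_eq_zero {n : ℕ} (hn : 1 ≤ n) :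
    (diagonal fun j : Fin n => if (j : ℕ) = 0 then (0 : ℝ) else 1).rank = n - 1 := by
  obtain ⟨k, rfl⟩ := Nat.exists_eq_add_of_le' hn
  simp [rank_diagonal, Fintype.card_subtype, Fin.val_eq_zero_iff, Finset.filter_ne']

section Wmatrix

variable {N n : ℕ}

theorem Wmatrix_apply (e f : Fin n → EuclideanSpace ℝ (Fin N)) (i j : Fin n) :
    Wmatrix e f i j = ⟪e i, f j⟫ :=
  rfl

theorem Wmatrix_transpose (e f : Fin n → EuclideanSpace ℝ (Fin N)) :
    (Wmatrix e f)ᵀ = Wmatrix f e := by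
  ext i j
  simp [Wmatrix_apply, real_inner_comm]

theorem Wmatrix_self {e : Fin n → EuclideanSpace ℝ (Fin N)} (he : Orthonormal ℝ e) :
    Wmatrix e e = 1 := by
  ext i j
  simp [Wmatrix_apply, one_apply, orthonormal_iff_ite.1 he]

theorem Wmatrix_mulVec_apply (e f : Fin n → EuclideanSpace ℝ (Fin N)) (x : Fin n → ℝ) (i : Fin n) :
    (Wmatrix e f *ᵥ x) i = ⟪e i, ∑ j, x j • f j⟫ := by
  simp [mulVec, dotProduct, Wmatrix_apply, inner_sum, real_inner_smul_right, mul_comm]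

theorem vecMul_Wmatrix_apply (e f : Fin n → EuclideanSpace ℝ (Fin N)) (y : Fin n → ℝ) (j : Fin n) :
    (y ᵥ* Wmatrix e f) j = ⟪∑ i, y i • e i, f j⟫ := by
  simp [vecMul, dotProduct, Wmatrix_apply, sum_inner, real_inner_smul_left]

theorem Wmatrix_eq_transpose_mul {e e' : Fin n → EuclideanSpace ℝ (Fin N)}
    (f : Fin n → EuclideanSpace ℝ (Fin N)) (he' : Orthonormal ℝ e')
    (he : ∀ i, e i ∈ span ℝ (range e')) : Wmatrix e f = (Wmatrix e' e)ᵀ * Wmatrix e' f := by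
  ext i j
  simp [Wmatrix_apply, mul_apply, inner_eq_sum_inner_mul_inner he' (he i)]

theorem Wmatrix_eq_mul (e : Fin n → EuclideanSpace ℝ (Fin N))
    {f f' : Fin n → EuclideanSpace ℝ (Fin N)} (hf' : Orthonormal ℝ f') (hf : ∀ j, f j ∈ span ℝ (range f')) :
    Wmatrix e f = Wmatrix e f' * Wmatrix f' f := by
  rw [← transpose_transpose (Wmatrix e f), Wmatrix_transpose, Wmatrix_eq_transpose_mul e hf' hf,
    transpose_mul, transpose_transpose, Wmatrix_transpose]

theorem Wmatrix_mul_transpose_eq_one {f f' : Fin n → EuclideanSpace ℝ (Fin N)}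
    (hf : Orthonormal ℝ f) (hf' : Orthonormal ℝ f') (hff' : ∀ j, f j ∈ span ℝ (range f')) :
    Wmatrix f' f * (Wmatrix f' f)ᵀ = 1 :=
  mul_eq_one_comm.1 (by rw [← Wmatrix_eq_transpose_mul f hf' hff', Wmatrix_self hf])

theorem transpose_mul_self_Wmatrix_eq {e e' f f' : Fin n → EuclideanSpace ℝ (Fin N)}
    (he : Orthonormal ℝ e) (he' : Orthonormal ℝ e') (hf' : Orthonormal ℝ f')
    (hee' : ∀ i, e i ∈ span ℝ (range e')) (hff' : ∀ j, f j ∈ span ℝ (range f')) :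
    (Wmatrix e f)ᵀ * Wmatrix e f =
      (Wmatrix f' f)ᵀ * ((Wmatrix e' f')ᵀ * Wmatrix e' f') * Wmatrix f' f := by
  have hA := Wmatrix_mul_transpose_eq_one he he' hee'
  rw [Wmatrix_eq_transpose_mul f he' hee', Wmatrix_eq_mul e' hf' hff']
  simp only [transpose_mul, transpose_transpose, Matrix.mul_assoc]
  rw [← Matrix.mul_assoc (Wmatrix e' e), hA, Matrix.one_mul]

theorem Wmatrix_castSucc_eq_diagonal {u : Fin (n + 1) → EuclideanSpace ℝ (Fin N)}
    (hu : Orthonormal ℝ u) :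
    Wmatrix (fun i : Fin n => u i.castSucc)
        (fun j => if (j : ℕ) = 0 then u (Fin.last n) else u j.castSucc) =
      diagonal fun j : Fin n => if (j : ℕ) = 0 then (0 : ℝ) else 1 := by
  ext i j
  rcases eq_or_ne i j with rfl | hij
  · by_cases hi : (i : ℕ) = 0 <;>
      simp [Wmatrix_apply, hi, hu.1, orthonormal_iff_ite.1 hu, Fin.castSucc_ne_last]
  · by_cases hj : (j : ℕ) = 0 <;>
      simp [Wmatrix_apply, hj, hij, orthonormal_iff_ite.1 hu, Fin.castSucc_ne_last]

theorem transpose_mul_self_Wmatrix_of_orthonormal_frame (hn : 1 ≤ n)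
    {e f : Fin n → EuclideanSpace ℝ (Fin N)} (he : Orthonormal ℝ e) (hf : Orthonormal ℝ f)
    {u : Fin (n + 1) → EuclideanSpace ℝ (Fin N)} (hu : Orthonormal ℝ u)
    (heu : span ℝ (range e) = span ℝ (range fun i : Fin n => u i.castSucc))
    (hfu : span ℝ (range f) = span ℝ (range fun i : Fin n =>
      if (i : ℕ) = 0 then u (Fin.last n) else u i.castSucc)) :
    IsIdempotentElem ((Wmatrix e f)ᵀ * Wmatrix e f) ∧
      ((Wmatrix e f)ᵀ * Wmatrix e f).rank = n - 1 := by
  have he' : Orthonormal ℝ fun i : Fin n => u i.castSucc := hu.comp _ (Fin.castSucc_injective n)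
  have hf' : Orthonormal ℝ fun i : Fin n =>
      if (i : ℕ) = 0 then u (Fin.last n) else u i.castSucc := by
    convert hu.comp _ (injective_ite_val_eq_zero_last_castSucc n) using 2 with i
    simp only [Function.comp_apply]
    split_ifs <;> rfl
  have hff' : ∀ j, f j ∈ span ℝ (range _) := fun j => hfu ▸ subset_span (mem_range_self j)
  have hee' : ∀ i, e i ∈ span ℝ (range _) := fun i => heu ▸ subset_span (mem_range_self i)
  have hB := Wmatrix_mul_transpose_eq_one hf hf' hff'
  rw [transpose_mul_self_Wmatrix_eq he he' hf' hee' hff', Wmatrix_castSucc_eq_diagonal hu,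
    diagonal_transpose, isIdempotentElem_diagonal_ite_val_eq_zero.eq]
  exact ⟨isIdempotentElem_diagonal_ite_val_eq_zero.transpose_mul_mul hB,
    (rank_transpose_mul_mul_of_mul_transpose_eq_one _ hB).trans (rank_diagonal_ite_val_eq_zero hn)⟩

theorem inf_orthogonal_ne_bot_of_det_Wmatrix_eq_zero {e f : Fin n → EuclideanSpace ℝ (Fin N)}
    (hf : LinearIndependent ℝ f) (h : (Wmatrix e f).det = 0) :
    span ℝ (range f) ⊓ (span ℝ (range e))ᗮ ≠ ⊥ := by
  obtain ⟨x, hx0, hWx⟩ := exists_mulVec_eq_zero_iff.2 h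
  refine (Submodule.ne_bot_iff _).2 ⟨∑ j, x j • f j, ⟨(mem_span_range_iff_exists_fun ℝ).2 ⟨x, rfl⟩,
    mem_orthogonal_span_range_iff.2 fun i => ?_⟩,
    fun h0 => hx0 (funext (Fintype.linearIndependent_iff.1 hf x h0))⟩
  rw [← Wmatrix_mulVec_apply, hWx, Pi.zero_apply]

theorem mem_span_of_transpose_mul_self_Wmatrix_mulVec_eq_self
    {e f : Fin n → EuclideanSpace ℝ (Fin N)} (he : Orthonormal ℝ e) (hf : Orthonormal ℝ f)
    {x : Fin n → ℝ} (hx : ((Wmatrix e f)ᵀ * Wmatrix e f) *ᵥ x = x) :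
    ∑ j, x j • f j ∈ span ℝ (range e) := by
  -- The first sum is the orthogonal projection of the second onto `span e`, and `hx` says that
  -- their difference is orthogonal to `span f` as well.
  have hp : ∑ i, (Wmatrix e f *ᵥ x) i • e i ∈ span ℝ (range e) :=
    (mem_span_range_iff_exists_fun ℝ).2 ⟨_, rfl⟩
  have hq : ∑ j, x j • f j ∈ span ℝ (range f) := (mem_span_range_iff_exists_fun ℝ).2 ⟨x, rfl⟩
  rwa [← eq_of_sub_mem_orthogonal_of_mem hp hq (mem_orthogonal_span_range_iff.2 fun i => ?_)
    (mem_orthogonal_span_range_iff.2 fun j => ?_)]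
  · rw [inner_sub_right, he.inner_right_fintype, ← Wmatrix_mulVec_apply, sub_self]
  · rw [inner_sub_right, hf.inner_right_fintype, real_inner_comm, ← vecMul_Wmatrix_apply,
      ← mulVec_transpose, mulVec_mulVec, hx, sub_self]

theorem rank_le_finrank_inf_of_isIdempotentElem {e f : Fin n → EuclideanSpace ℝ (Fin N)}
    (he : Orthonormal ℝ e) (hf : Orthonormal ℝ f)
    (h : IsIdempotentElem ((Wmatrix e f)ᵀ * Wmatrix e f)) :
    ((Wmatrix e f)ᵀ * Wmatrix e f).rank ≤ finrank ℝ ↥(span ℝ (range e) ⊓ span ℝ (range f)) := by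
  set G := (Wmatrix e f)ᵀ * Wmatrix e f
  set T := Fintype.linearCombination ℝ f
  have hT : Function.Injective T :=
    linearIndependent_iff_injective_fintypeLinearCombination.1 hf.linearIndependent
  have hle : (LinearMap.range G.mulVecLin).map T ≤ span ℝ (range e) ⊓ span ℝ (range f) := by
    rintro _ ⟨_, ⟨x, rfl⟩, rfl⟩
    refine ⟨?_, by rw [← Fintype.range_linearCombination]; exact LinearMap.mem_range_self _ _⟩
    rw [Fintype.linearCombination_apply]
    exact mem_span_of_transpose_mul_self_Wmatrix_mulVec_eq_self he hf
      (by rw [mulVecLin_apply, mulVec_mulVec, h.eq])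
  calc G.rank = finrank ℝ ↥((LinearMap.range G.mulVecLin).map T) :=
        (equivMapOfInjective T hT _).finrank_eq
    _ ≤ _ := finrank_mono hle

end Wmatrix

theorem s_orthogonal_tfae_general {n m : ℕ} (hn : 1 ≤ n)
    (P Q : Submodule ℝ (EuclideanSpace ℝ (Fin (n + m))))
    (hP : finrank ℝ P = n) (hQ : finrank ℝ Q = n)
    (e f : Fin n → EuclideanSpace ℝ (Fin (n + m)))
    (he : Orthonormal ℝ e) (hf : Orthonormal ℝ f)
    (heP : P = Submodule.span ℝ (Set.range e))
    (hfQ : Q = Submodule.span ℝ (Set.range f)) :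
    List.TFAE
      [ finrank ℝ ↥(P ⊓ Q) = n - 1 ∧ (Wmatrix e f).det = 0,
        finrank ℝ ↥(P ⊔ Q) = n + 1 ∧ (Wmatrix e f).det = 0,
        ((Wmatrix e f)ᵀ * Wmatrix e f) * ((Wmatrix e f)ᵀ * Wmatrix e f) =
            (Wmatrix e f)ᵀ * Wmatrix e f ∧
          ((Wmatrix e f)ᵀ * Wmatrix e f).rank = n - 1,
        ∃ u : Fin (n + 1) → EuclideanSpace ℝ (Fin (n + m)), Orthonormal ℝ u ∧
          P = Submodule.span ℝ (Set.range fun i : Fin n => u i.castSucc) ∧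
          Q = Submodule.span ℝ (Set.range fun i : Fin n =>
            if (i : ℕ) = 0 then u (Fin.last n) else u i.castSucc) ] := by
  have hdim := finrank_sup_add_finrank_inf_eq P Q
  have hQP : (Wmatrix e f).det = 0 → Q ⊓ Pᗮ ≠ ⊥ := fun hdet => by
    rw [heP, hfQ]
    exact inf_orthogonal_ne_bot_of_det_Wmatrix_eq_zero hf.linearIndependent hdet
  tfae_have 1 ↔ 2 := by
    constructor <;> rintro ⟨h, hdet⟩ <;> exact ⟨by omega, hdet⟩
  tfae_have 1 → 4 := by
    rintro ⟨hPQ, hdet⟩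
    obtain ⟨k, rfl⟩ := Nat.exists_eq_add_of_le' hn
    exact exists_orthonormal_of_finrank_inf hP hQ hPQ (hQP hdet)
  tfae_have 4 → 3 := fun ⟨u, hu, hPu, hQu⟩ =>
    transpose_mul_self_Wmatrix_of_orthonormal_frame hn he hf hu (heP ▸ hPu) (hfQ ▸ hQu)
  tfae_have 3 → 1 := by
    rintro ⟨hidem, hrank⟩
    have hdet : (Wmatrix e f).det = 0 := by
      by_contra hdet
      rw [rank_transpose_mul_self, rank_of_det_ne_zero hdet, Fintype.card_fin] at hrank
      omega
    have hlt := finrank_inf_lt_of_inf_orthogonal_ne_bot (hQP hdet)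
    have hle := rank_le_finrank_inf_of_isIdempotentElem he hf hidem
    rw [← heP, ← hfQ] at hle
    exact ⟨by omega, hdet⟩
  tfae_finish

/-- Equivalent characterizations of **S-orthogonality** (Proposition 2.1) of two
`n`-dimensional subspaces `P, Q ⊆ ℝ^{n+m}`:
(a) `dim(P ∩ Q) = n − 1` and `det W = 0`;
(b) `dim(P + Q) = n + 1` and `det W = 0`;
(c) `WᵀW` is idempotent (symmetric) of rank `n − 1`;
(e) there are orthonormal vectors `u_1, …, u_{n+1}` with `P = span(u_1, …, u_n)` and
`Q = span(u_{n+1}, u_2, …, u_n)`. -/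
theorem s_orthogonal_tfae {n m : ℕ} (hn : 1 ≤ n) (hm : 1 ≤ m)
    (P Q : Submodule ℝ (EuclideanSpace ℝ (Fin (n + m))))
    (hP : finrank ℝ P = n) (hQ : finrank ℝ Q = n)
    (e f : Fin n → EuclideanSpace ℝ (Fin (n + m)))
    (he : Orthonormal ℝ e) (hf : Orthonormal ℝ f)
    (heP : P = Submodule.span ℝ (Set.range e))
    (hfQ : Q = Submodule.span ℝ (Set.range f)) :
    List.TFAE
      [ finrank ℝ ↥(P ⊓ Q) = n - 1 ∧ (Wmatrix e f).det = 0,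
        finrank ℝ ↥(P ⊔ Q) = n + 1 ∧ (Wmatrix e f).det = 0,
        ((Wmatrix e f)ᵀ * Wmatrix e f) * ((Wmatrix e f)ᵀ * Wmatrix e f) =
            (Wmatrix e f)ᵀ * Wmatrix e f ∧
          ((Wmatrix e f)ᵀ * Wmatrix e f).rank = n - 1,
        ∃ u : Fin (n + 1) → EuclideanSpace ℝ (Fin (n + m)), Orthonormal ℝ u ∧
          P = Submodule.span ℝ (Set.range fun i : Fin n => u i.castSucc) ∧
          Q = Submodule.span ℝ (Set.range fun i : Fin n =>
            if (i : ℕ) = 0 then u (Fin.last n) else u i.castSucc) ] :=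
  s_orthogonal_tfae_general hn P Q hP hQ e f he hf heP hfQ
end
end

section
/- Let n, m ≥ 1 and let P, Q be n-dimensional linear subspaces of ℝ^{n+m} such that the W-matrix W = (⟨e_i, f_j⟩) of some (equivalently, any) orthonormal bases (e_i) of P and (f_j) of Q is invertible. Then there exist an integer r with 0 ≤ r ≤ min{n, m}, angles θ_1 ≥ θ_2 ≥ ⋯ ≥ θ_r with θ_i ∈ (0, π/2) for 1 ≤ i ≤ r, an orthonormal basis (e_1,…,e_n) of P, and orthonormal vectors e_{n+1},…,e_{n+m} spanning the orthogonal complement of P in ℝ^{n+m}, such that the vectors f_i := cos θ_i · e_i + sin θ_i · e_{n+i} for 1 ≤ i ≤ r together with f_i := e_i for r+1 ≤ i ≤ n form an orthonormal basis of Q. (The θ_i, together with n − r zero angles, are the Jordan angles between P and Q.) -/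
/-!
The compression `C = π_Q ∘ π_{Pᗮ}` of the projection onto `Pᗮ` to `Q` is a symmetric operator
on `Q` with `⟪C x, y⟫ = ⟪π_{Pᗮ} x, π_{Pᗮ} y⟫`, so an orthonormal eigenbasis `f` of `Q` has pairwise
orthogonal projections onto `Pᗮ`, hence also onto `P`; the eigenvalues are `sin² θᵢ` with
`sin θᵢ = ‖π_{Pᗮ} fᵢ‖`, and listing them in decreasing order makes the angles decrease.
Invertibility of `W` forces `Q ∩ Pᗮ = 0`, so no `π_P fᵢ` vanishes. Normalizing the
`π_P fᵢ` gives an orthonormal basis `e_1, …, e_n` of `P`; normalizing the nonzero `π_{Pᗮ} fᵢ`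
(those with `i ≤ r`) gives orthonormal vectors of `Pᗮ`, which are extended to an orthonormal basis
`e_{n+1}, …, e_{n+m}` of `Pᗮ`. Then `fᵢ = π_P fᵢ + π_{Pᗮ} fᵢ = cos θᵢ eᵢ + sin θᵢ e_{n+i}`.
-/

noncomputable section

open Module

open Submodule Finset

theorem Submodule.eq_span_of_linearIndependent {𝕜 V ι : Type*} [DivisionRing 𝕜] [AddCommGroup V]
    [Module 𝕜 V] [Fintype ι] {K : Submodule 𝕜 V} [FiniteDimensional 𝕜 K] {v : ι → V}
    (hv : LinearIndependent 𝕜 v) (hvK : ∀ i, v i ∈ K) (hK : finrank 𝕜 K = Fintype.card ι) :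
    K = span 𝕜 (Set.range v) :=
  (eq_of_le_of_finrank_le (span_le.mpr (Set.range_subset_iff.mpr hvK))
    (by rw [hK, finrank_span_eq_card hv])).symm

theorem Fin.lt_card_filter_iff_of_isLowerSet {n : ℕ} {p : Fin n → Prop} [DecidablePred p]
    (hp : IsLowerSet {i | p i}) (i : Fin n) : (i : ℕ) < #{j | p j} ↔ p i := by
  constructor
  · intro hi
    by_contra hpi
    have hsub : ({j | p j} : Finset (Fin n)) ⊆ Iio i := fun j hj => by
      simp only [mem_filter, mem_univ, true_and] at hj
      exact mem_Iio.mpr (lt_of_not_ge fun hij => hpi (hp hij hj))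
    have := card_le_card hsub
    rw [Fin.card_Iio] at this
    omega
  · intro hpi
    have hsub : Iic i ⊆ ({j | p j} : Finset (Fin n)) := fun j hj => by
      simpa using hp (mem_Iic.mp hj) hpi
    have := card_le_card hsub
    rw [Fin.card_Iic] at this
    omega

section

variable {E : Type*} [NormedAddCommGroup E] [InnerProductSpace ℝ E]

theorem orthonormal_inv_norm_smul {ι : Type*} {v : ι → E} (hv₀ : ∀ i, v i ≠ 0)
    (hv : Pairwise fun i j => inner ℝ (v i) (v j) = 0) :
    Orthonormal ℝ fun i => ‖v i‖⁻¹ • v i :=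
  ⟨fun i => norm_smul_inv_norm (hv₀ i), fun i j hij => by
    dsimp only
    rw [real_inner_smul_left, real_inner_smul_right, hv hij, mul_zero, mul_zero]⟩

theorem Orthonormal.fin_append {n m : ℕ} {u : Fin n → E} {v : Fin m → E} (hu : Orthonormal ℝ u)
    (hv : Orthonormal ℝ v) (huv : ∀ i j, inner ℝ (u i) (v j) = 0) :
    Orthonormal ℝ (Fin.append u v) := by
  refine ⟨Fin.addCases (by simpa using hu.1) (by simpa using hv.1), ?_⟩
  intro k l hkl
  induction k using Fin.addCases <;> induction l using Fin.addCases <;>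
    simp only [Fin.append_left, Fin.append_right]
  · exact hu.2 fun h => hkl (h ▸ rfl)
  · exact huv _ _
  · rw [real_inner_comm]; exact huv _ _
  · exact hv.2 fun h => hkl (h ▸ rfl)

theorem Orthonormal.exists_orthonormalBasis_extension_fin {r m : ℕ} {v : Fin r → E}
    (hv : Orthonormal ℝ v) (F : Submodule ℝ E) [FiniteDimensional ℝ F] (hvF : ∀ j, v j ∈ F)
    (hF : finrank ℝ F = m) :
    ∃ hrm : r ≤ m, ∃ b : OrthonormalBasis (Fin m) ℝ F, ∀ j, (b (Fin.castLE hrm j) : E) = v j := by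
  have hv' := hv.codRestrict F hvF
  have hrm : r ≤ m := by simpa [hF] using hv'.linearIndependent.fintype_card_le_finrank
  let w : Fin m → F := fun α => if h : (α : ℕ) < r then Set.codRestrict v F hvF ⟨α, h⟩ else 0
  have hw : Orthonormal ℝ (Set.domRestrict (π := fun _ => F) {α : Fin m | (α : ℕ) < r} w) := by
    convert hv'.comp (fun α : {α : Fin m | (α : ℕ) < r} => (⟨α, α.2⟩ : Fin r))
      fun α β h => by simpa [Fin.ext_iff, Subtype.ext_iff] using h
    funext α
    exact dif_pos α.2
  obtain ⟨b, hb⟩ := hw.exists_orthonormalBasis_extension_of_card_eq (by rw [hF, Fintype.card_fin])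
  exact ⟨hrm, b, fun j => by rw [hb _ j.2]; simp [w]⟩

end

namespace Submodule

variable {𝕜 E : Type*} [RCLike 𝕜] [NormedAddCommGroup E] [InnerProductSpace 𝕜 E]
  (L : Submodule 𝕜 E) [L.HasOrthogonalProjection]

def compression (T : E →ₗ[𝕜] E) : L →ₗ[𝕜] L :=
  L.orthogonalProjectionOnto.toLinearMap ∘ₗ T ∘ₗ L.subtype

theorem inner_compression_apply (T : E →ₗ[𝕜] E) (x y : L) :
    inner 𝕜 (L.compression T x) y = inner 𝕜 (T x) (y : E) :=
  inner_orthogonalProjectionOnto_eq_of_mem_right y (T x)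

theorem _root_.LinearMap.IsSymmetric.compression {T : E →ₗ[𝕜] E} (hT : T.IsSymmetric) :
    (L.compression T).IsSymmetric := by
  intro x y
  rw [inner_compression_apply, hT, ← inner_conj_symm, ← inner_compression_apply, inner_conj_symm]

end Submodule

section

variable {E : Type*} [NormedAddCommGroup E] [InnerProductSpace ℝ E]
  (K : Submodule ℝ E) [K.HasOrthogonalProjection]

theorem inner_starProjection_starProjection (x y : E) :
    inner ℝ (K.starProjection x) (K.starProjection y) = inner ℝ (K.starProjection x) y := by
  rw [← inner_starProjection_left_eq_right,
    starProjection_eq_self_iff.mpr (K.starProjection_apply_mem x)]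

theorem inner_starProjection_add_inner_starProjection_orthogonal (x y : E) :
    inner ℝ (K.starProjection x) (K.starProjection y) +
      inner ℝ (Kᗮ.starProjection x) (Kᗮ.starProjection y) = inner ℝ x y := by
  rw [inner_starProjection_starProjection, inner_starProjection_starProjection, ← inner_add_left,
    starProjection_add_starProjection_orthogonal]

theorem cos_arcsin_norm_starProjection_orthogonal {x : E} (hx : ‖x‖ = 1) :
    Real.cos (Real.arcsin ‖Kᗮ.starProjection x‖) = ‖K.starProjection x‖ := by
  have h := norm_sq_eq_add_norm_sq_starProjection x K
  rw [hx, one_pow] at h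
  rw [Real.cos_arcsin, ← Real.sqrt_sq (norm_nonneg (K.starProjection x))]
  congr 1
  linarith

theorem norm_starProjection_orthogonal_lt_one {x : E} (hx : ‖x‖ = 1)
    (hKx : K.starProjection x ≠ 0) : ‖Kᗮ.starProjection x‖ < 1 := by
  have h := norm_sq_eq_add_norm_sq_starProjection x K
  rw [hx, one_pow] at h
  have : 0 < ‖K.starProjection x‖ := norm_pos_iff.mpr hKx
  nlinarith [norm_nonneg (Kᗮ.starProjection x)]

theorem exists_orthonormalBasis_antitone_norm_starProjection (L : Submodule ℝ E)
    [FiniteDimensional ℝ L] {n : ℕ} (hL : finrank ℝ L = n) :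
    ∃ f : OrthonormalBasis (Fin n) ℝ L, Antitone (fun i => ‖K.starProjection (f i)‖) ∧
      Pairwise fun i j => inner ℝ (K.starProjection (f i)) (K.starProjection (f j)) = 0 := by
  have hT := K.starProjection_isSymmetric.compression L
  set f := hT.eigenvectorBasis hL
  set μ := hT.eigenvalues hL
  have hinner : ∀ i j, inner ℝ (K.starProjection (f i)) (K.starProjection (f j)) =
      μ i * inner ℝ (f i) (f j) := by
    intro i j
    have h := inner_compression_apply L (K.starProjection : E →ₗ[ℝ] E) (f i) (f j)
    rw [hT.apply_eigenvectorBasis, real_inner_smul_left] at h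
    rw [inner_starProjection_starProjection, ← ContinuousLinearMap.coe_coe, ← h]
    rfl
  have hnorm : ∀ i, ‖K.starProjection (f i)‖ = √(μ i) := by
    intro i
    rw [← Real.sqrt_sq (norm_nonneg _), ← real_inner_self_eq_norm_sq, hinner,
      real_inner_self_eq_norm_sq, f.orthonormal.1 i, one_pow, mul_one]
  refine ⟨f, fun i j hij => ?_, fun i j hij => ?_⟩
  · simp only [hnorm]
    exact Real.sqrt_le_sqrt (hT.eigenvalues_antitone hL hij)
  · exact (hinner i j).trans (by rw [f.orthonormal.2 hij, mul_zero])

end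

theorem disjoint_span_orthogonal_of_det_Wmatrix_ne_zero {n N : ℕ}
    {e f : Fin n → EuclideanSpace ℝ (Fin N)} (hW : (Wmatrix e f).det ≠ 0) :
    Disjoint (span ℝ (Set.range f)) (span ℝ (Set.range e))ᗮ := by
  rw [disjoint_def]
  intro x hxf hxe
  obtain ⟨c, rfl⟩ := (mem_span_range_iff_exists_fun ℝ).mp hxf
  have hWc : (Wmatrix e f).mulVec c = 0 := by
    funext i
    have h := inner_right_of_mem_orthogonal (subset_span (Set.mem_range_self i)) hxe
    simpa [Matrix.mulVec, dotProduct, Wmatrix, inner_sum, real_inner_smul_right, mul_comm] using h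
  have hc : c = 0 := Matrix.mulVec_injective_iff_isUnit.mpr
    ((Matrix.isUnit_iff_isUnit_det _).mpr hW.isUnit) (hWc.trans (Matrix.mulVec_zero _).symm)
  simp [hc]

section

variable {E : Type*} [NormedAddCommGroup E] [InnerProductSpace ℝ E]

theorem exists_jordan_frame [FiniteDimensional ℝ E] {n m r : ℕ} (P : Submodule ℝ E)
    (hP : finrank ℝ P = n) (hPo : finrank ℝ Pᗮ = m) {f : Fin n → E} (hf : Orthonormal ℝ f)
    (hPf₀ : ∀ i, P.starProjection (f i) ≠ 0)
    (hPof : Pairwise fun i j => inner ℝ (Pᗮ.starProjection (f i)) (Pᗮ.starProjection (f j)) = 0)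
    (hrn : r ≤ n) (hr : ∀ i : Fin n, (i : ℕ) < r ↔ Pᗮ.starProjection (f i) ≠ 0) :
    ∃ (hrm : r ≤ m) (e : Fin (n + m) → E), Orthonormal ℝ e ∧
      P = span ℝ (Set.range fun i : Fin n => e (Fin.castAdd m i)) ∧
      Pᗮ = span ℝ (Set.range fun α : Fin m => e (Fin.natAdd n α)) ∧
      (∀ i, P.starProjection (f i) = ‖P.starProjection (f i)‖ • e (Fin.castAdd m i)) ∧
      ∀ (i : Fin n) (hi : (i : ℕ) < r), Pᗮ.starProjection (f i) =
        ‖Pᗮ.starProjection (f i)‖ • e ⟨n + i, Nat.add_lt_add_left (hi.trans_le hrm) n⟩ := by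
  have hPf : Pairwise fun i j => inner ℝ (P.starProjection (f i)) (P.starProjection (f j)) = 0 :=
    fun i j hij => by
      have h := inner_starProjection_add_inner_starProjection_orthogonal P (f i) (f j)
      rwa [hPof hij, add_zero, hf.2 hij] at h
  set u := fun i => ‖P.starProjection (f i)‖⁻¹ • P.starProjection (f i)
  have hu : Orthonormal ℝ u := orthonormal_inv_norm_smul hPf₀ hPf
  have huP : ∀ i, u i ∈ P := fun i => P.smul_mem _ (P.starProjection_apply_mem _)
  set g : Fin r → E := fun j =>
    ‖Pᗮ.starProjection (f (Fin.castLE hrn j))‖⁻¹ • Pᗮ.starProjection (f (Fin.castLE hrn j))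
  have hg : Orthonormal ℝ g :=
    orthonormal_inv_norm_smul (fun j => (hr _).mp j.2)
      fun i j hij => hPof ((Fin.castLE_injective hrn).ne hij)
  obtain ⟨hrm, b, hb⟩ := hg.exists_orthonormalBasis_extension_fin Pᗮ
    (fun j => Pᗮ.smul_mem _ (Pᗮ.starProjection_apply_mem _)) hPo
  have hb' : Orthonormal ℝ fun α => (b α : E) := b.orthonormal.comp_linearIsometry Pᗮ.subtypeₗᵢ
  refine ⟨hrm, Fin.append u fun α => b α,
    hu.fin_append hb' fun i α => inner_right_of_mem_orthogonal (huP i) (b α).2, ?_, ?_, ?_, ?_⟩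
  · simpa only [Fin.append_left] using
      eq_span_of_linearIndependent hu.linearIndependent huP (by rw [hP, Fintype.card_fin])
  · simpa only [Fin.append_right] using
      eq_span_of_linearIndependent hb'.linearIndependent (fun α => (b α).2)
        (by rw [hPo, Fintype.card_fin])
  · intro i
    rw [Fin.append_left, smul_inv_smul₀ (norm_ne_zero_iff.mpr (hPf₀ i))]
  · intro i hi
    rw [show (⟨n + i, _⟩ : Fin (n + m)) = Fin.natAdd n (Fin.castLE hrm ⟨i, hi⟩) from rfl,
      Fin.append_right, hb]
    exact (smul_inv_smul₀ (norm_ne_zero_iff.mpr ((hr i).mp hi)) _).symm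

def jordanFamily {n m r : ℕ} (θ : Fin r → ℝ) (e : Fin (n + m) → E) (hrm : r ≤ m) : Fin n → E :=
  fun i => if h : (i : ℕ) < r then
    Real.cos (θ ⟨i, h⟩) • e (Fin.castAdd m i) +
      Real.sin (θ ⟨i, h⟩) • e ⟨n + i, Nat.add_lt_add_left (h.trans_le hrm) n⟩
  else e (Fin.castAdd m i)

theorem jordanFamily_arcsin_eq {n m r : ℕ} (P : Submodule ℝ E) [P.HasOrthogonalProjection]
    {f : Fin n → E} (hf : ∀ i, ‖f i‖ = 1) {e : Fin (n + m) → E} (hrn : r ≤ n) (hrm : r ≤ m)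
    (hr : ∀ i : Fin n, (i : ℕ) < r ↔ Pᗮ.starProjection (f i) ≠ 0)
    (hfP : ∀ i, P.starProjection (f i) = ‖P.starProjection (f i)‖ • e (Fin.castAdd m i))
    (hfPo : ∀ (i : Fin n) (hi : (i : ℕ) < r), Pᗮ.starProjection (f i) =
      ‖Pᗮ.starProjection (f i)‖ • e ⟨n + i, Nat.add_lt_add_left (hi.trans_le hrm) n⟩) :
    jordanFamily (fun j => Real.arcsin ‖Pᗮ.starProjection (f (Fin.castLE hrn j))‖) e hrm = f := by
  funext i
  by_cases hi : (i : ℕ) < r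
  · have hsin : ‖Pᗮ.starProjection (f i)‖ ≤ 1 := (norm_starProjection_apply_le _ _).trans (hf i).le
    rw [jordanFamily, dif_pos hi, show Fin.castLE hrn ⟨i, hi⟩ = i from rfl,
      cos_arcsin_norm_starProjection_orthogonal P (hf i),
      Real.sin_arcsin (by linarith [norm_nonneg (Pᗮ.starProjection (f i))]) hsin, ← hfP,
      ← hfPo i hi, starProjection_add_starProjection_orthogonal]
  · have hfi : f i = P.starProjection (f i) :=
      sub_eq_zero.mp ((starProjection_orthogonal_val (K := P) (f i)).symm.trans
        (not_not.mp ((hr i).not.mp hi)))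
    have h := hfP i
    rw [← hfi, hf i, one_smul] at h
    rw [jordanFamily, dif_neg hi, h]

theorem exists_jordan_normal_form [FiniteDimensional ℝ E] {n m : ℕ} (P Q : Submodule ℝ E)
    (hP : finrank ℝ P = n) (hPo : finrank ℝ Pᗮ = m) (hQ : finrank ℝ Q = n) (hPQ : Disjoint Q Pᗮ) :
    ∃ (r : ℕ) (_ : r ≤ n) (hrm : r ≤ m) (θ : Fin r → ℝ) (e : Fin (n + m) → E),
      Antitone θ ∧ (∀ i : Fin r, θ i ∈ Set.Ioo 0 (Real.pi / 2)) ∧ Orthonormal ℝ e ∧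
      P = span ℝ (Set.range fun i : Fin n => e (Fin.castAdd m i)) ∧
      Pᗮ = span ℝ (Set.range fun α : Fin m => e (Fin.natAdd n α)) ∧
      Orthonormal ℝ (jordanFamily θ e hrm) ∧ Q = span ℝ (Set.range (jordanFamily θ e hrm)) := by
  classical
  obtain ⟨f, hanti, hPof⟩ := exists_orthonormalBasis_antitone_norm_starProjection Pᗮ Q hQ
  have hf : Orthonormal ℝ fun i => (f i : E) := f.orthonormal.comp_linearIsometry Q.subtypeₗᵢ
  have hPf₀ : ∀ i, P.starProjection (f i) ≠ 0 := fun i h =>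
    hf.ne_zero i (disjoint_def.mp hPQ _ (f i).2 ((starProjection_apply_eq_zero_iff P).mp h))
  set r := #{i | Pᗮ.starProjection (f i) ≠ 0}
  have hr : ∀ i : Fin n, (i : ℕ) < r ↔ Pᗮ.starProjection (f i) ≠ 0 :=
    Fin.lt_card_filter_iff_of_isLowerSet
      fun i j hji hi => norm_pos_iff.mp ((norm_pos_iff.mpr hi).trans_le (hanti hji))
  have hrn : r ≤ n := (card_filter_le _ _).trans_eq (card_fin n)
  obtain ⟨hrm, e, he, hPe, hPoe, hfP, hfPo⟩ := exists_jordan_frame P hP hPo hf hPf₀ hPof hrn hr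
  refine ⟨r, hrn, hrm, fun j => Real.arcsin ‖Pᗮ.starProjection (f (Fin.castLE hrn j))‖, e,
    fun a b hab => Real.monotone_arcsin (hanti hab), fun j =>
    ⟨Real.arcsin_pos.mpr (norm_pos_iff.mpr ((hr _).mp j.2)), Real.arcsin_lt_pi_div_two.mpr
      (norm_starProjection_orthogonal_lt_one P (hf.1 _) (hPf₀ _))⟩, he, hPe, hPoe, ?_⟩
  rw [jordanFamily_arcsin_eq P hf.1 hrn hrm hr hfP hfPo]
  exact ⟨hf, eq_span_of_linearIndependent hf.linearIndependent (fun i => (f i).2)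
    (by rw [hQ, Fintype.card_fin])⟩

end

/-- **Jordan-angle normal form** for a pair of `n`-dimensional subspaces `P, Q ⊆ ℝ^{n+m}`
with invertible `W`-matrix: there are `0 ≤ r ≤ min{n,m}` angles
`π/2 > θ_1 ≥ ⋯ ≥ θ_r > 0`, an orthonormal basis `e_1, …, e_n` of `P` and orthonormal
vectors `e_{n+1}, …, e_{n+m}` spanning `Pᗮ` such that
`f_i = cos θ_i e_i + sin θ_i e_{n+i}` (for `i ≤ r`) and `f_i = e_i` (for `i > r`)
form an orthonormal basis of `Q`. -/
theorem jordan_angle_normal_form {n m : ℕ}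
    (P Q : Submodule ℝ (EuclideanSpace ℝ (Fin (n + m))))
    (hP : finrank ℝ P = n) (hQ : finrank ℝ Q = n)
    (e₀ f₀ : Fin n → EuclideanSpace ℝ (Fin (n + m)))
    (heP : P = Submodule.span ℝ (Set.range e₀))
    (hfQ : Q = Submodule.span ℝ (Set.range f₀))
    (hW : (Wmatrix e₀ f₀).det ≠ 0) :
    ∃ (r : ℕ) (hr : r ≤ min n m) (θ : Fin r → ℝ)
      (e : Fin (n + m) → EuclideanSpace ℝ (Fin (n + m))),
      Antitone θ ∧ (∀ i : Fin r, θ i ∈ Set.Ioo 0 (Real.pi / 2)) ∧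
      Orthonormal ℝ e ∧
      P = Submodule.span ℝ (Set.range fun i : Fin n => e (Fin.castAdd m i)) ∧
      Pᗮ = Submodule.span ℝ (Set.range fun α : Fin m => e (Fin.natAdd n α)) ∧
      Orthonormal ℝ (fun i : Fin n =>
        if h : (i : ℕ) < r then
          Real.cos (θ ⟨i, h⟩) • e (Fin.castAdd m i) +
            Real.sin (θ ⟨i, h⟩) • e ⟨n + (i : ℕ), by omega⟩
        else e (Fin.castAdd m i)) ∧
      Q = Submodule.span ℝ (Set.range fun i : Fin n =>
        if h : (i : ℕ) < r then
          Real.cos (θ ⟨i, h⟩) • e (Fin.castAdd m i) +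
            Real.sin (θ ⟨i, h⟩) • e ⟨n + (i : ℕ), by omega⟩
        else e (Fin.castAdd m i)) := by
  have hPo : finrank ℝ Pᗮ = m := by
    have h := P.finrank_add_finrank_orthogonal
    rw [hP, finrank_euclideanSpace_fin] at h
    omega
  obtain ⟨r, hrn, hrm, θ, e, hθ, hθI, he, hPe, hPoe, hfe, hQe⟩ :=
    exists_jordan_normal_form P Q hP hPo hQ
      (heP ▸ hfQ ▸ disjoint_span_orthogonal_of_det_Wmatrix_ne_zero hW)
  exact ⟨r, le_min hrn hrm, θ, e, hθ, hθI, he, hPe, hPoe, hfe, hQe⟩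
end
end

section
/- Let n, m ≥ 1 and let (u_1, …, u_{n+m}) be an orthonormal basis of ℝ^{n+m}. Let P₀ = span(u_1, u_2, …, u_n) and Q = span(u_{n+1}, u_2, …, u_n). For an n-dimensional subspace S of ℝ^{n+m} with orthonormal basis (s_1,…,s_n), set x₁(S) := det(⟨s_i, u_j⟩)_{1≤i,j≤n} (the Gram determinant against (u_1,u_2,…,u_n)) and x₂(S) := det of the n×n matrix whose (i,1) entry is ⟨s_i, u_{n+1}⟩ and whose (i,j) entry for 2 ≤ j ≤ n is ⟨s_i, u_j⟩ (the Gram determinant against (u_{n+1},u_2,…,u_n)). Then x₁(S)² + x₂(S)² ≤ 1, with equality if and only if S = span(cos t · u_1 + sin t · u_{n+1}, u_2, …, u_n) for some t ∈ ℝ. -/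
/-!
For orthonormal families `s`, `v` of `k` vectors, `det ⟪s i, v j⟫` is the determinant, in the
orthonormal basis `v` of `V = span v`, of the orthogonal projections `P s i` onto `V`. Hadamard's
inequality bounds its absolute value by `∏ ‖P s i‖ ≤ 1`, with equality exactly when every `s i`
lies in `V`; exchanging `s` and `v` transposes the matrix, so this means `span s = span v`.

Expanding along the first column, the Gram determinant of `S` against the rotated family
`(cos t • u₁ + sin t • u_{n+1}, u₂, …, uₙ)` is `x₁ cos t + x₂ sin t`, whose square is at most
`x₁² + x₂²`, with equality for `t` the argument of `x₁ + i x₂`.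
-/

noncomputable section

open Module Matrix

open scoped RealInnerProductSpace

variable {E : Type*} [NormedAddCommGroup E] [InnerProductSpace ℝ E]

theorem Finset.one_le_of_one_le_prod {ι R : Type*} [CommMonoidWithZero R] [PartialOrder R]
    [ZeroLEOneClass R] [PosMulMono R] [DecidableEq ι] {t : Finset ι} {f : ι → R}
    (h0 : ∀ i ∈ t, 0 ≤ f i) (h1 : ∀ i ∈ t, f i ≤ 1) (h : 1 ≤ ∏ i ∈ t, f i) {i : ι}
    (hi : i ∈ t) : 1 ≤ f i :=
  calc 1 ≤ ∏ j ∈ t, f j := h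
    _ = f i * ∏ j ∈ t.erase i, f j := (Finset.mul_prod_erase t f hi).symm
    _ ≤ f i * 1 := mul_le_mul_of_nonneg_left
        (Finset.prod_le_one (fun j hj => h0 j (Finset.mem_of_mem_erase hj))
          fun j hj => h1 j (Finset.mem_of_mem_erase hj)) (h0 i hi)
    _ = f i := mul_one _

theorem OrthonormalBasis.abs_det_le_prod_norm {F : Type*} [NormedAddCommGroup F]
    [InnerProductSpace ℝ F] {k : ℕ} (b : OrthonormalBasis (Fin k) ℝ F) (w : Fin k → F) :
    |b.toBasis.det w| ≤ ∏ i, ‖w i‖ := by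
  have : Fact (finrank ℝ F = k) := ⟨by simpa using Module.finrank_eq_card_basis b.toBasis⟩
  rw [← b.toBasis.orientation.volumeForm_robust' b]
  exact b.toBasis.orientation.abs_volumeForm_apply_le w

instance Submodule.finiteDimensional_span_range {ι : Type*} [Finite ι] (v : ι → E) :
    FiniteDimensional ℝ (Submodule.span ℝ (Set.range v)) :=
  FiniteDimensional.span_of_finite ℝ (Set.finite_range v)

def Orthonormal.orthonormalBasisSpan {ι : Type*} [Fintype ι] {v : ι → E} (hv : Orthonormal ℝ v) :
    OrthonormalBasis ι ℝ (Submodule.span ℝ (Set.range v)) :=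
  (Basis.span hv.linearIndependent).toOrthonormalBasis <| by
    rw [show ⇑(Basis.span hv.linearIndependent) = _ from funext (Basis.span_apply _)]
    exact orthonormal_span hv

@[simp]
theorem Orthonormal.coe_orthonormalBasisSpan_apply {ι : Type*} [Fintype ι] {v : ι → E}
    (hv : Orthonormal ℝ v) (i : ι) : (hv.orthonormalBasisSpan i : E) = v i := by
  simp [Orthonormal.orthonormalBasisSpan]

def innerMatrix {ι κ : Type*} (s : ι → E) (v : κ → E) : Matrix ι κ ℝ :=
  Matrix.of fun i j => ⟪s i, v j⟫

theorem innerMatrix_transpose {ι κ : Type*} (s : ι → E) (v : κ → E) :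
    (innerMatrix s v)ᵀ = innerMatrix v s := by
  ext i j
  exact real_inner_comm _ _

section

variable {k : ℕ} {s v : Fin k → E}

theorem det_innerMatrix_eq_basis_det (hv : Orthonormal ℝ v) :
    (innerMatrix s v).det = hv.orthonormalBasisSpan.toBasis.det
      fun i => (Submodule.span ℝ (Set.range v)).orthogonalProjectionOnto (s i) := by
  rw [Basis.det_apply, ← det_transpose]
  congr 1
  ext i j
  simp [innerMatrix, Basis.toMatrix_apply, OrthonormalBasis.repr_apply_apply, real_inner_comm]

theorem abs_det_innerMatrix_le_prod_norm (hv : Orthonormal ℝ v) :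
    |(innerMatrix s v).det| ≤
      ∏ i, ‖(Submodule.span ℝ (Set.range v)).starProjection (s i)‖ := by
  rw [det_innerMatrix_eq_basis_det hv]
  exact hv.orthonormalBasisSpan.abs_det_le_prod_norm _

theorem sq_det_innerMatrix_le_one (hs : Orthonormal ℝ s) (hv : Orthonormal ℝ v) :
    (innerMatrix s v).det ^ 2 ≤ 1 := by
  have : |(innerMatrix s v).det| ≤ 1 :=
    (abs_det_innerMatrix_le_prod_norm hv).trans <| Finset.prod_le_one (fun _ _ => norm_nonneg _)
      fun i _ => (Submodule.norm_starProjection_apply_le _ _).trans (hs.1 i).le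
  exact (sq_le_one_iff_abs_le_one _).mpr this

theorem span_le_of_sq_det_innerMatrix_eq_one (hs : Orthonormal ℝ s) (hv : Orthonormal ℝ v)
    (h : (innerMatrix s v).det ^ 2 = 1) :
    Submodule.span ℝ (Set.range s) ≤ Submodule.span ℝ (Set.range v) := by
  set V := Submodule.span ℝ (Set.range v)
  have hle : ∀ i, ‖V.starProjection (s i)‖ ≤ 1 := fun i =>
    (V.norm_starProjection_apply_le _).trans (hs.1 i).le
  have hprod : 1 ≤ ∏ i, ‖V.starProjection (s i)‖ := by
    have habs : |(innerMatrix s v).det| = 1 :=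
      (pow_eq_one_iff_of_nonneg (abs_nonneg _) two_ne_zero).mp (by rw [sq_abs, h])
    exact habs ▸ abs_det_innerMatrix_le_prod_norm hv
  rw [Submodule.span_le]
  rintro _ ⟨i, rfl⟩
  rw [SetLike.mem_coe, V.mem_iff_norm_starProjection, hs.1 i]
  exact (hle i).antisymm <| Finset.one_le_of_one_le_prod (fun _ _ => norm_nonneg _)
    (fun j _ => hle j) hprod (Finset.mem_univ i)

theorem sq_det_innerMatrix_eq_one (hs : Orthonormal ℝ s) (hv : Orthonormal ℝ v)
    (h : ∀ i, s i ∈ Submodule.span ℝ (Set.range v)) : (innerMatrix s v).det ^ 2 = 1 := by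
  set V := Submodule.span ℝ (Set.range v)
  set b := hv.orthonormalBasisSpan
  set w : Fin k → V := fun i => ⟨s i, h i⟩
  have hw : gram ℝ w = 1 := gram_eq_one_iff_orthonormal.mpr (hs.codRestrict V h)
  have hdet : (innerMatrix s v).det = b.toBasis.det w := by
    rw [det_innerMatrix_eq_basis_det hv]
    congr 1
    funext i
    exact V.orthogonalProjectionOnto_mem_subspace_eq_self (w i)
  rw [gram_eq_conjTranspose_mul b] at hw
  have := congrArg Matrix.det hw
  rw [det_mul, det_conjTranspose, det_one] at this
  rw [hdet, Basis.det_apply, ← this, sq, star_trivial]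
  rfl

theorem sq_det_innerMatrix_eq_one_iff (hs : Orthonormal ℝ s) (hv : Orthonormal ℝ v) :
    (innerMatrix s v).det ^ 2 = 1 ↔
      Submodule.span ℝ (Set.range s) = Submodule.span ℝ (Set.range v) :=
  ⟨fun h => (span_le_of_sq_det_innerMatrix_eq_one hs hv h).antisymm
      (span_le_of_sq_det_innerMatrix_eq_one hv hs
        (by rwa [← innerMatrix_transpose, det_transpose])),
    fun h => sq_det_innerMatrix_eq_one hs hv fun i => h ▸ Submodule.subset_span ⟨i, rfl⟩⟩

end

theorem innerMatrix_update {ι κ : Type*} [DecidableEq κ] (s : ι → E) (v : κ → E) (a : κ)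
    (x : E) :
    innerMatrix s (Function.update v a x) = (innerMatrix s v).updateCol a fun i => ⟪s i, x⟫ := by
  ext i j
  rcases eq_or_ne j a with rfl | hj <;> simp [innerMatrix, *]

theorem det_innerMatrix_update_add {ι : Type*} [Fintype ι] [DecidableEq ι] (s v : ι → E)
    (a : ι) (c d : ℝ) (x y : E) :
    (innerMatrix s (Function.update v a (c • x + d • y))).det =
      c * (innerMatrix s (Function.update v a x)).det +
        d * (innerMatrix s (Function.update v a y)).det := by
  simp only [innerMatrix_update, inner_add_right, real_inner_smul_right]
  rw [show (fun i => c * ⟪s i, x⟫ + d * ⟪s i, y⟫) = c • (fun i => ⟪s i, x⟫) + d • fun i => ⟪s i, y⟫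
    from rfl, det_updateCol_add, det_updateCol_smul, det_updateCol_smul]

theorem Orthonormal.update_cos_smul_add_sin_smul {ι κ : Type*} [DecidableEq κ] {u : ι → E}
    (hu : Orthonormal ℝ u) {f : κ → ι} (hf : Function.Injective f) {b : ι}
    (hb : b ∉ Set.range f) (a : κ) (t : ℝ) :
    Orthonormal ℝ (Function.update (u ∘ f) a (Real.cos t • u (f a) + Real.sin t • u b)) := by
  classical
  have hfb : ∀ j, f j ≠ b := fun j h => hb ⟨j, h⟩
  rw [orthonormal_iff_ite] at hu ⊢
  intro i j
  by_cases hi : i = a <;> by_cases hj : j = a <;>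
    simp only [Function.update_apply, Function.comp_apply, hi, hj, if_true, if_false,
      inner_add_left, inner_add_right, real_inner_smul_left, real_inner_smul_right, hu,
      hf.eq_iff, hfb, (hfb _).symm]
  · linear_combination Real.cos_sq_add_sin_sq t
  · simp [Ne.symm hj]
  · simp

theorem sq_cos_mul_add_sin_mul_le (x y t : ℝ) :
    (Real.cos t * x + Real.sin t * y) ^ 2 ≤ x ^ 2 + y ^ 2 := by
  nlinarith [sq_nonneg (Real.sin t * x - Real.cos t * y), Real.sin_sq_add_cos_sq t]

theorem exists_sq_cos_mul_add_sin_mul_eq (x y : ℝ) :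
    ∃ t, (Real.cos t * x + Real.sin t * y) ^ 2 = x ^ 2 + y ^ 2 := by
  set z : ℂ := ⟨x, y⟩
  have hx : ‖z‖ * Real.cos z.arg = x := Complex.norm_mul_cos_arg z
  have hy : ‖z‖ * Real.sin z.arg = y := Complex.norm_mul_sin_arg z
  have hz : ‖z‖ ^ 2 = x ^ 2 + y ^ 2 := by
    rw [Complex.sq_norm, Complex.normSq_mk]; ring
  refine ⟨z.arg, ?_⟩
  rw [← hz, ← hx, ← hy]
  calc (Real.cos z.arg * (‖z‖ * Real.cos z.arg) + Real.sin z.arg * (‖z‖ * Real.sin z.arg)) ^ 2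
      = (‖z‖ * (Real.sin z.arg ^ 2 + Real.cos z.arg ^ 2)) ^ 2 := by ring
    _ = ‖z‖ ^ 2 := by rw [Real.sin_sq_add_cos_sq, mul_one]

theorem Fin.ite_val_eq_zero_eq_update {α : Type*} {n : ℕ} (hn : 1 ≤ n) (g : Fin n → α) (x : α) :
    (fun j : Fin n => if (j : ℕ) = 0 then x else g j) = Function.update g ⟨0, hn⟩ x := by
  ext j
  simp [Function.update_apply, Fin.ext_iff]

theorem s_map_into_unit_disk_general {n m : ℕ} (hn : 1 ≤ n) (hm : 1 ≤ m)
    (u : Fin (n + m) → EuclideanSpace ℝ (Fin (n + m)))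
    (hu : Orthonormal ℝ u)
    (s : Fin n → EuclideanSpace ℝ (Fin (n + m))) (hs : Orthonormal ℝ s)
    (x₁ x₂ : ℝ)
    (hx₁ : x₁ = (Matrix.of fun i j : Fin n =>
      (inner ℝ (s i) (u (Fin.castAdd m j)) : ℝ)).det)
    (hx₂ : x₂ = (Matrix.of fun i j : Fin n =>
      (inner ℝ (s i) (if (j : ℕ) = 0 then u (Fin.natAdd n ⟨0, hm⟩)
        else u (Fin.castAdd m j)) : ℝ)).det) :
    x₁ ^ 2 + x₂ ^ 2 ≤ 1 ∧
    (x₁ ^ 2 + x₂ ^ 2 = 1 ↔ ∃ t : ℝ,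
      Submodule.span ℝ (Set.range s) =
        Submodule.span ℝ (Set.range fun j : Fin n =>
          if (j : ℕ) = 0 then
            Real.cos t • u (Fin.castAdd m ⟨0, hn⟩) + Real.sin t • u (Fin.natAdd n ⟨0, hm⟩)
          else u (Fin.castAdd m j))) := by
  set w := u ∘ Fin.castAdd m
  set b := Fin.natAdd n ⟨0, hm⟩
  set v : ℝ → Fin n → EuclideanSpace ℝ (Fin (n + m)) := fun t =>
    Function.update w ⟨0, hn⟩ (Real.cos t • w ⟨0, hn⟩ + Real.sin t • u b)
  have hb : b ∉ Set.range (Fin.castAdd m) := by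
    rintro ⟨j, hj⟩
    simp [b, Fin.ext_iff] at hj
    omega
  have hv : ∀ t, Orthonormal ℝ (v t) := fun t =>
    hu.update_cos_smul_add_sin_smul (Fin.castAdd_injective n m) hb _ t
  have hx₁' : x₁ = (innerMatrix s w).det := hx₁
  have hx₂' : x₂ = (innerMatrix s (Function.update w ⟨0, hn⟩ (u b))).det := by
    rw [hx₂, ← Fin.ite_val_eq_zero_eq_update hn]
    rfl
  have hdet : ∀ t, (innerMatrix s (v t)).det = Real.cos t * x₁ + Real.sin t * x₂ := by
    intro t
    rw [det_innerMatrix_update_add, Function.update_eq_self, hx₁', hx₂']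
  have hspan : ∀ t, (Set.range fun j : Fin n => if (j : ℕ) = 0 then
      Real.cos t • u (Fin.castAdd m ⟨0, hn⟩) + Real.sin t • u b else u (Fin.castAdd m j)) =
      Set.range (v t) := fun t =>
    congrArg Set.range (Fin.ite_val_eq_zero_eq_update hn w _)
  simp_rw [hspan, ← sq_det_innerMatrix_eq_one_iff hs (hv _), hdet]
  obtain ⟨t₀, ht₀⟩ := exists_sq_cos_mul_add_sin_mul_eq x₁ x₂
  have hle : ∀ t, (Real.cos t * x₁ + Real.sin t * x₂) ^ 2 ≤ 1 := fun t =>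
    hdet t ▸ sq_det_innerMatrix_le_one hs (hv t)
  refine ⟨ht₀ ▸ hle t₀, fun h => ⟨t₀, ht₀.trans h⟩, fun ⟨t, ht⟩ => ?_⟩
  exact (ht₀ ▸ hle t₀).antisymm (ht ▸ sq_cos_mul_add_sin_mul_le x₁ x₂ t)

/-- **The S-map has image in the closed unit disk** (Section 2). Given an orthonormal basis
`u_1, …, u_{n+m}` of `ℝ^{n+m}` and the S-orthogonal pair `P₀ = span(u_1, …, u_n)`,
`Q = span(u_{n+1}, u_2, …, u_n)`, for every `n`-dimensional subspace `S` with orthonormal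
basis `s_1, …, s_n` the Gram determinants `x₁ = det⟨s_i, (u_1, u_2, …, u_n)_j⟩` and
`x₂ = det⟨s_i, (u_{n+1}, u_2, …, u_n)_j⟩` satisfy `x₁² + x₂² ≤ 1`, with equality iff
`S = span(cos t·u_1 + sin t·u_{n+1}, u_2, …, u_n)` for some `t ∈ ℝ`. -/
theorem s_map_into_unit_disk {n m : ℕ} (hn : 1 ≤ n) (hm : 1 ≤ m)
    (u : Fin (n + m) → EuclideanSpace ℝ (Fin (n + m)))
    (hu : Orthonormal ℝ u)
    (hu_basis : Submodule.span ℝ (Set.range u) = ⊤)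
    (s : Fin n → EuclideanSpace ℝ (Fin (n + m))) (hs : Orthonormal ℝ s)
    (x₁ x₂ : ℝ)
    (hx₁ : x₁ = (Matrix.of fun i j : Fin n =>
      (inner ℝ (s i) (u (Fin.castAdd m j)) : ℝ)).det)
    (hx₂ : x₂ = (Matrix.of fun i j : Fin n =>
      (inner ℝ (s i) (if (j : ℕ) = 0 then u (Fin.natAdd n ⟨0, hm⟩)
        else u (Fin.castAdd m j)) : ℝ)).det) :
    x₁ ^ 2 + x₂ ^ 2 ≤ 1 ∧
    (x₁ ^ 2 + x₂ ^ 2 = 1 ↔ ∃ t : ℝ,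
      Submodule.span ℝ (Set.range s) =
        Submodule.span ℝ (Set.range fun j : Fin n =>
          if (j : ℕ) = 0 then
            Real.cos t • u (Fin.castAdd m ⟨0, hn⟩) + Real.sin t • u (Fin.natAdd n ⟨0, hm⟩)
          else u (Fin.castAdd m j))) :=
  s_map_into_unit_disk_general hn hm u hu s hs x₁ x₂ hx₁ hx₂
end
end
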